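/- Let n ≥ 3 and let R be a weakly PIC₁ algebraic curvature operator on ℝⁿ. Then for any orthonormal vectors e₁, e₂, e₃ ∈ ℝⁿ one has K(e₁,e₂) + K(e₁,e₃) ≥ 0, where K(x,y) = Σ_{i,j,k,l} R_{ijkl} x_i y_j x_k y_l denotes the (unnormalized) sectional curvature of the plane spanned by orthonormal x, y. -/

import Mathlib

open Matrix BigOperators Finset

/-- An algebraic curvature operator on ℝⁿ: symmetries and first Bianchi identity. -/
def IsCurvOp (n : ℕ) (R : Fin n → Fin n → Fin n → Fin n → ℝ) : Prop :=
  (∀ i j k l, R i j k l = - R j i k l) ∧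
  (∀ i j k l, R i j k l = - R i j l k) ∧
  (∀ i j k l, R i j k l = R k l i j) ∧
  (∀ i j k l, R i j k l + R j k i l + R k i j l = 0)

/-- The complex-bilinear extension of the curvature form to `so(n,ℂ)`. -/
noncomputable def rformC {n : ℕ} (R : Fin n → Fin n → Fin n → Fin n → ℝ)
    (v w : Matrix (Fin n) (Fin n) ℂ) : ℂ :=
  (1/4) * ∑ i, ∑ j, ∑ k, ∑ l, (R i j k l : ℂ) * v i j * w k l

/-- The Ricci tensor of a curvature operator. -/
noncomputable def ricci {n : ℕ} (R : Fin n → Fin n → Fin n → Fin n → ℝ) :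
    Matrix (Fin n) (Fin n) ℝ :=
  Matrix.of fun a b => ∑ i, R i a i b

/-- The scalar curvature of a curvature operator. -/
noncomputable def scal {n : ℕ} (R : Fin n → Fin n → Fin n → Fin n → ℝ) : ℝ :=
  ∑ a, ricci R a a

/-- Entrywise complex conjugate of a matrix. -/
noncomputable def mconj {n : ℕ} (v : Matrix (Fin n) (Fin n) ℂ) : Matrix (Fin n) (Fin n) ℂ :=
  v.map (starRingEnd ℂ)

/-- The (unnormalized) sectional curvature `K(x,y) = Σ R_{ijkl} x_i y_j x_k y_l`. -/
noncomputable def sectK {n : ℕ} (R : Fin n → Fin n → Fin n → Fin n → ℝ)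
    (x y : Fin n → ℝ) : ℝ :=
  ∑ i, ∑ j, ∑ k, ∑ l, R i j k l * x i * y j * x k * y l


/-! For orthonormal `e₁, e₂, e₃` put `b = e₂ + i e₃` and `v = e₁ ∧ b = e₁ bᵀ - b e₁ᵀ`. Because `b` is
isotropic (`b ⬝ b = 0`) and orthogonal to the unit vector `e₁`, one gets `v² = -b bᵀ` and `v³ = 0`,
while `e₁, b` are linearly independent, so `v` has rank 2 and is admissible in the PIC₁ condition.
Expanding, `R(v, v̄) = Σ R_{ijkl} e₁ⁱ bʲ e₁ᵏ b̄ˡ`, and since `Re (bʲ b̄ˡ) = e₂ʲ e₂ˡ + e₃ʲ e₃ˡ` its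
real part is `K(e₁,e₂) + K(e₁,e₃)`. -/

namespace Matrix

variable {K ι : Type*}

def wedge [Mul K] [Sub K] (x y : ι → K) : Matrix ι ι K :=
  vecMulVec x y - vecMulVec y x

section CommRing

variable [CommRing K]

theorem wedge_apply (x y : ι → K) (i j : ι) : wedge x y i j = x i * y j - y i * x j := rfl

theorem transpose_wedge (x y : ι → K) : (wedge x y)ᵀ = -wedge x y := by
  ext i j
  simp only [wedge_apply, transpose_apply, neg_apply]
  ring

theorem wedge_mul_wedge_mul_wedge [Fintype ι] {x y : ι → K} (hxy : x ⬝ᵥ y = 0)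
    (hyy : y ⬝ᵥ y = 0) : wedge x y * wedge x y * wedge x y = 0 := by
  have hyx : y ⬝ᵥ x = 0 := by rwa [dotProduct_comm]
  have hsq : wedge x y * wedge x y = -vecMulVec y ((x ⬝ᵥ x) • y) := by
    simp [wedge, sub_mul, mul_sub, vecMulVec_mul_vecMulVec, hxy, hyx, hyy]
  rw [hsq, wedge, neg_mul, mul_sub, vecMulVec_mul_vecMulVec, vecMulVec_mul_vecMulVec]
  simp [hyx, hyy]

theorem sum_mul_wedge_of_antisymm [Fintype ι] {f : ι → ι → K} (hf : ∀ i j, f i j = -f j i)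
    (x y : ι → K) : ∑ i, ∑ j, f i j * wedge x y i j = 2 * ∑ i, ∑ j, f i j * x i * y j := by
  have hswap : ∑ i, ∑ j, f i j * y i * x j = -∑ i, ∑ j, f i j * x i * y j := by
    rw [Finset.sum_comm]
    simp only [← Finset.sum_neg_distrib]
    exact Finset.sum_congr rfl fun i _ => Finset.sum_congr rfl fun j _ => by rw [hf]; ring
  simp only [wedge_apply, mul_sub, ← mul_assoc, Finset.sum_sub_distrib, hswap]
  ring

end CommRing

theorem rank_mul_eq_right_of_injective_mulVec {m : Type*} [CommRing K] [Fintype ι] [Fintype m]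
    (A : Matrix ι m K) (B : Matrix m ι K) (hA : Function.Injective A.mulVec) :
    (A * B).rank = B.rank := by
  rw [rank, rank, mulVecLin_mul, LinearMap.range_comp,
    ← (Submodule.equivMapOfInjective A.mulVecLin hA _).finrank_eq]

theorem rank_wedge [Field K] [Fintype ι] {x y : ι → K} (h : LinearIndependent K ![x, y]) :
    (wedge x y).rank = 2 := by
  set N : Matrix (Fin 2) ι K := of ![x, y]
  have hN : wedge x y = Nᵀ * ((!![0, 1; -1, 0] : Matrix (Fin 2) (Fin 2) K) * N) := by
    ext i j
    simp [N, wedge_apply, mul_apply, Fin.sum_univ_two, sub_eq_add_neg, mul_comm]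
  rw [hN, rank_mul_eq_right_of_injective_mulVec _ _ (mulVec_injective_iff (M := Nᵀ) |>.mpr h),
    rank_mul_eq_right_of_isUnit_det _ _ (by simp [det_fin_two_of])]
  simpa using LinearIndependent.rank_matrix (M := N) h

end Matrix

open Matrix

theorem linearIndependent_pair_of_dotProduct {K ι : Type*} [Field K] [Fintype ι] {x y : ι → K}
    (hxx : x ⬝ᵥ x ≠ 0) (hxy : x ⬝ᵥ y = 0) (hy : y ≠ 0) : LinearIndependent K ![x, y] := by
  rw [LinearIndependent.pair_iff]
  intro s t hst
  have hs : s = 0 := by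
    simpa [dotProduct_add, dotProduct_smul, hxy, hxx] using congrArg (x ⬝ᵥ ·) hst
  subst hs
  simpa [hy] using hst

section Curvature

variable {n : ℕ} {R : Fin n → Fin n → Fin n → Fin n → ℝ}

theorem rformC_wedge (h₁ : ∀ i j k l, R i j k l = -R j i k l)
    (h₂ : ∀ i j k l, R i j k l = -R i j l k) (x y z w : Fin n → ℂ) :
    rformC R (wedge x y) (wedge z w) =
      ∑ i, ∑ j, ∑ k, ∑ l, (R i j k l : ℂ) * x i * y j * z k * w l := by
  set S : Fin n → Fin n → ℂ := fun i j => 2 * ∑ k, ∑ l, (R i j k l : ℂ) * z k * w l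
  have hinner : ∀ i j, ∑ k, ∑ l, (R i j k l : ℂ) * wedge x y i j * wedge z w k l =
      S i j * wedge x y i j := by
    intro i j
    have h := sum_mul_wedge_of_antisymm (f := fun k l => (R i j k l : ℂ))
      (fun k l => by simp only [h₂ i j k l, Complex.ofReal_neg]) z w
    simp only [S, ← h, Finset.sum_mul]
    exact Finset.sum_congr rfl fun k _ => Finset.sum_congr rfl fun l _ => mul_right_comm _ _ _
  have hS : ∀ i j, S i j = -S j i := by
    intro i j
    simp only [S, Finset.mul_sum, ← Finset.sum_neg_distrib]
    exact Finset.sum_congr rfl fun k _ => Finset.sum_congr rfl fun l _ => by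
      rw [h₁]; push_cast; ring
  rw [rformC, Finset.sum_congr rfl fun i _ => Finset.sum_congr rfl fun j _ => hinner i j,
    sum_mul_wedge_of_antisymm hS, ← mul_assoc, Finset.mul_sum]
  refine Finset.sum_congr rfl fun i _ => ?_
  rw [Finset.mul_sum]
  refine Finset.sum_congr rfl fun j _ => ?_
  simp only [S, Finset.mul_sum, Finset.sum_mul]
  exact Finset.sum_congr rfl fun k _ => Finset.sum_congr rfl fun l _ => by ring

theorem mconj_wedge (x y : Fin n → ℂ) : mconj (wedge x y) = wedge (star x) (star y) := by
  ext i j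
  simp [mconj, wedge_apply]

theorem re_rformC_wedge_mconj (h₁ : ∀ i j k l, R i j k l = -R j i k l)
    (h₂ : ∀ i j k l, R i j k l = -R i j l k) (x y z : Fin n → ℝ) :
    let v := wedge (fun i => (x i : ℂ)) (fun i => y i + Complex.I * z i)
    (rformC R v (mconj v)).re = sectK R x y + sectK R x z := by
  intro v
  simp only [v, mconj_wedge, rformC_wedge h₁ h₂, Complex.re_sum, sectK,
    ← Finset.sum_add_distrib]
  refine Finset.sum_congr rfl fun i _ => Finset.sum_congr rfl fun j _ =>
    Finset.sum_congr rfl fun k _ => Finset.sum_congr rfl fun l _ => ?_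
  simp [Complex.mul_re, Complex.mul_im]

end Curvature

theorem stmt6_general (n : ℕ) (R : Fin n → Fin n → Fin n → Fin n → ℝ)
    (hR : IsCurvOp n R)
    -- weakly PIC₁: `R(v,v̄) ≥ 0` for every `v ∈ so(n,ℂ)` with rank 2 and `v³ = 0`
    (hpic1 : ∀ v : Matrix (Fin n) (Fin n) ℂ, vᵀ = -v → v.rank = 2 → v * v * v = 0 →
      0 ≤ (rformC R v (mconj v)).re) :
    ∀ e₁ e₂ e₃ : Fin n → ℝ,
      e₁ ⬝ᵥ e₁ = 1 → e₂ ⬝ᵥ e₂ = 1 → e₃ ⬝ᵥ e₃ = 1 →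
      e₁ ⬝ᵥ e₂ = 0 → e₁ ⬝ᵥ e₃ = 0 → e₂ ⬝ᵥ e₃ = 0 →
      0 ≤ sectK R e₁ e₂ + sectK R e₁ e₃ := by
  intro e₁ e₂ e₃ h11 h22 h33 h12 h13 h23
  set a : Fin n → ℂ := fun i => (e₁ i : ℂ)
  set b : Fin n → ℂ := fun i => e₂ i + Complex.I * e₃ i
  have haa : a ⬝ᵥ a ≠ 0 := by
    simp only [dotProduct] at h11
    simp [Complex.ext_iff, a, dotProduct, Complex.re_sum, Complex.im_sum, h11]
  have hab : a ⬝ᵥ b = 0 := by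
    simp only [dotProduct] at h12 h13
    simp [Complex.ext_iff, a, b, dotProduct, Complex.re_sum, Complex.im_sum, h12, h13]
  have hbb : b ⬝ᵥ b = 0 := by
    simp only [dotProduct] at h22 h33 h23
    simp [Complex.ext_iff, b, dotProduct, Complex.re_sum, Complex.im_sum, Finset.sum_add_distrib,
      Finset.sum_sub_distrib, h22, h33, h23, mul_comm (e₃ _)]
  have hb : b ≠ 0 := fun hb => by
    have : e₂ = 0 := funext fun i => by simpa [b] using congrArg Complex.re (congrFun hb i)
    simp [this] at h22
  rw [← re_rformC_wedge_mconj hR.1 hR.2.1]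
  exact hpic1 _ (transpose_wedge a b)
    (rank_wedge (linearIndependent_pair_of_dotProduct haa hab hb))
    (wedge_mul_wedge_mul_wedge hab hbb)

/-- if `n ≥ 3` and `R` is a weakly PIC₁ algebraic curvature operator on ℝⁿ,
then for any orthonormal `e₁, e₂, e₃ ∈ ℝⁿ` one has `K(e₁,e₂) + K(e₁,e₃) ≥ 0`. -/
theorem stmt6 (n : ℕ) (hn : 3 ≤ n) (R : Fin n → Fin n → Fin n → Fin n → ℝ)
    (hR : IsCurvOp n R)
    -- weakly PIC₁: `R(v,v̄) ≥ 0` for every `v ∈ so(n,ℂ)` with rank 2 and `v³ = 0`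
    (hpic1 : ∀ v : Matrix (Fin n) (Fin n) ℂ, vᵀ = -v → v.rank = 2 → v * v * v = 0 →
      0 ≤ (rformC R v (mconj v)).re) :
    ∀ e₁ e₂ e₃ : Fin n → ℝ,
      e₁ ⬝ᵥ e₁ = 1 → e₂ ⬝ᵥ e₂ = 1 → e₃ ⬝ᵥ e₃ = 1 →
      e₁ ⬝ᵥ e₂ = 0 → e₁ ⬝ᵥ e₃ = 0 → e₂ ⬝ᵥ e₃ = 0 →
      0 ≤ sectK R e₁ e₂ + sectK R e₁ e₃ :=
  stmt6_general n R hR hpic1
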